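/- Let A = (a_{ij}) be a p×p positive semidefinite Hermitian matrix with real nonnegative diagonal entries, and let I = (I_{ij}) be a real symmetric p×p matrix with I_{ij} ≥ 0 whenever i ≠ j. If Σ_{i,j} a_{ij} I_{ij} = 0 (this sum is automatically real), then Σ_{i,j} √(a_{ii}) √(a_{jj}) I_{ij} ≥ 0. -/

import Mathlib

open scoped ComplexOrder

/-!
Entrywise Cauchy–Schwarz for a positive semidefinite matrix (the `2 × 2` principal minors are
nonnegative) gives `Re A i j ≤ √(A i i) √(A j j)`, with equality on the diagonal. Since `B` is
nonnegative off the diagonal, replacing `Re A i j` by `√(A i i) √(A j j)` can only increase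
`∑ i j, Re A i j * B i j`, which is the real part of the vanishing sum.
-/

namespace Matrix.PosSemidef

variable {n 𝕜 : Type*} [RCLike 𝕜] {A : Matrix n n 𝕜}

theorem norm_apply_sq_le (hA : A.PosSemidef) (i j : n) :
    ‖A i j‖ ^ 2 ≤ RCLike.re (A i i) * RCLike.re (A j j) := by
  have hdet : 0 ≤ A i i * A j j - A i j * A j i := by
    have := (hA.submatrix ![i, j]).det_nonneg
    rwa [det_fin_two] at this
  have hdiag (k : n) : (RCLike.re (A k k) : 𝕜) = A k k :=
    RCLike.conj_eq_iff_re.mp (hA.isHermitian.apply k k)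
  rw [← hA.isHermitian.apply j i, RCLike.star_def, RCLike.mul_conj, ← hdiag i, ← hdiag j] at hdet
  exact_mod_cast sub_nonneg.mp hdet

theorem re_apply_le_sqrt_mul_sqrt (hA : A.PosSemidef) (i j : n) :
    RCLike.re (A i j) ≤ √(RCLike.re (A i i)) * √(RCLike.re (A j j)) := by
  have hnorm := hA.norm_apply_sq_le i j
  rw [← Real.sqrt_mul (RCLike.nonneg_iff.mp hA.diag_nonneg).1]
  exact (RCLike.re_le_norm _).trans <|
    (Real.le_sqrt (norm_nonneg _) <| (sq_nonneg _).trans hnorm).mpr hnorm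

end Matrix.PosSemidef

theorem Matrix.sum_mul_le_sum_mul_of_offDiag_le {n : Type*} [Fintype n] {M N B : Matrix n n ℝ}
    (hdiag : ∀ i, M i i = N i i) (hle : ∀ i j, i ≠ j → M i j ≤ N i j)
    (hB : ∀ i j, i ≠ j → 0 ≤ B i j) :
    ∑ i, ∑ j, M i j * B i j ≤ ∑ i, ∑ j, N i j * B i j := by
  refine Finset.sum_le_sum fun i _ => Finset.sum_le_sum fun j _ => ?_
  rcases eq_or_ne i j with rfl | hij
  · rw [hdiag]
  · exact mul_le_mul_of_nonneg_right (hle i j hij) (hB i j hij)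

theorem sqrt_diag_quadratic_nonneg_general
    {p : ℕ} (A : Matrix (Fin p) (Fin p) ℂ) (hA : A.PosSemidef)
    (B : Matrix (Fin p) (Fin p) ℝ)
    (hBoff : ∀ i j, i ≠ j → 0 ≤ B i j)
    (hsum : ∑ i, ∑ j, A i j * (B i j : ℂ) = 0) :
    0 ≤ ∑ i, ∑ j, Real.sqrt (A i i).re * Real.sqrt (A j j).re * B i j := by
  have hre : ∑ i, ∑ j, (A i j).re * B i j = 0 := by
    simpa only [Complex.re_sum, Complex.re_mul_ofReal, Complex.zero_re] using congrArg Complex.re hsum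
  calc 0 = ∑ i, ∑ j, (A i j).re * B i j := hre.symm
    _ ≤ _ := Matrix.sum_mul_le_sum_mul_of_offDiag_le
      (fun i => (Real.mul_self_sqrt (Complex.nonneg_iff.mp hA.diag_nonneg).1).symm)
      (fun i j _ => hA.re_apply_le_sqrt_mul_sqrt i j) hBoff

/-- If `A` is a positive semidefinite Hermitian matrix (with real nonnegative diagonal) and
`B` is a real symmetric matrix with nonnegative off-diagonal entries such that
`∑ i j, A i j * B i j = 0`, then `∑ i j, √(A i i) * √(A j j) * B i j ≥ 0`. -/
theorem sqrt_diag_quadratic_nonneg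
    {p : ℕ} (A : Matrix (Fin p) (Fin p) ℂ) (hA : A.PosSemidef)
    (hdiag : ∀ i, (A i i).im = 0 ∧ 0 ≤ (A i i).re)
    (B : Matrix (Fin p) (Fin p) ℝ) (hBsymm : B.IsSymm)
    (hBoff : ∀ i j, i ≠ j → 0 ≤ B i j)
    (hsum : ∑ i, ∑ j, A i j * (B i j : ℂ) = 0) :
    0 ≤ ∑ i, ∑ j, Real.sqrt (A i i).re * Real.sqrt (A j j).re * B i j :=
  sqrt_diag_quadratic_nonneg_general A hA B hBoff hsum
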